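/- Strong LP duality for the one-stage risk-averse problem: if the primal problem min { z : z ≥ ⟨q^k, θ⟩ ∀k; θ_j ≥ ⟨c_j, y_j⟩ + V(x_j) ∀j; A_j x_j + B_j x₀ + T_j y_j = d_j ∀j; 0 ≤ x_j ≤ x̄; 0 ≤ y_j ≤ ȳ } with polyhedral convex V is feasible with finite value, then its value equals the value of the dual problem sup over (φ ∈ Δ_K, γ, λ, μ ≥ 0, ζ ≥ 0, ξ ≥ 0) with γ_j = Σ_k φ_k q^k_j and γ_j c_j + T_jᵀ λ_j + ξ_j ≥ 0, of Σ_j [ λ_jᵀ(B_j x₀ − d_j) − x̄ᵀζ_j − ȳᵀξ_j + inf_{x_j} ( ⟨A_jᵀλ_j − μ_j + ζ_j, x_j⟩ + γ_j V(x_j) ) ]. -/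

import Mathlib

/-!
Replacing `V` by its affine pieces turns the primal problem into a linear program in the
variables `(z, θ, x, y)`: the constraint on `θ j` becomes `θ j ≥ ⟨c j, y j⟩ + ⟨aV i, x j⟩ + bV i`
for every piece `i`. Weak duality is the usual Lagrangian estimate, scenario by scenario.

For the converse, LP duality (Farkas' lemma, from hyperplane separation once finitely generated
cones are known to be closed, by Carathéodory's theorem for cones) provides multipliers whose
combination of the constraints is the objective `z` and whose value is at least the primal
value. Comparing the coefficients of `z`, `θ`, `x` and `y` shows that they form a dual feasible
point: the multipliers `σ j i` of the pieces of `V` sum to `γ j`, and they bound the inner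
infimum of scenario `j` from below by `∑ i, σ j i * bV i`.
-/

namespace PointedCone

open Set

section Algebra

variable {R E ι : Type*} [Semiring R] [PartialOrder R] [IsOrderedRing R] [AddCommMonoid E]
  [Module R E] [Fintype ι]

lemma mem_hull_range_iff {v : ι → E} {x : E} :
    x ∈ hull R (range v) ↔ ∃ u : ι → R, (∀ i, 0 ≤ u i) ∧ ∑ i, u i • v i = x := by
  rw [Submodule.mem_span_range_iff_exists_fun]
  constructor
  · rintro ⟨c, rfl⟩
    exact ⟨fun i => c i, fun i => (c i).2, by simp only [Nonneg.coe_smul]⟩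
  · rintro ⟨u, hu, rfl⟩
    exact ⟨fun i => ⟨u i, hu i⟩, by simp only [← Nonneg.coe_smul]⟩

end Algebra

section Caratheodory

variable {𝕜 E ι : Type*} [Field 𝕜] [LinearOrder 𝕜] [IsStrictOrderedRing 𝕜] [AddCommGroup E]
  [Module 𝕜 E]

lemma exists_sum_erase_eq_of_not_linearIndepOn [DecidableEq ι] {v : ι → E} {s : Finset ι}
    (hs : ¬LinearIndepOn 𝕜 v s) {u : ι → 𝕜} (hu : ∀ i ∈ s, 0 ≤ u i) :
    ∃ i₀ ∈ s, ∃ u' : ι → 𝕜, (∀ i ∈ s.erase i₀, 0 ≤ u' i) ∧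
      ∑ i ∈ s.erase i₀, u' i • v i = ∑ i ∈ s, u i • v i := by
  obtain ⟨g, hg, hpos⟩ :
      ∃ g : ι → 𝕜, ∑ i ∈ s, g i • v i = 0 ∧ (s.filter (0 < g ·)).Nonempty := by
    simp only [linearIndepOn_finset_iff, not_forall] at hs
    obtain ⟨g, hg, i, hi, hgi⟩ := hs
    rcases Ne.lt_or_gt hgi with hneg | hpos
    · exact ⟨-g, by simp [neg_smul, hg], i, by simpa [hi] using hneg⟩
    · exact ⟨g, hg, i, by simpa [hi] using hpos⟩
  -- move along the relation `g` until the first coefficient of `u` vanishes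
  obtain ⟨i₀, hi₀, hmin⟩ := (s.filter (0 < g ·)).exists_min_image (fun i => u i / g i) hpos
  rw [Finset.mem_filter] at hi₀
  set t := u i₀ / g i₀
  have ht : 0 ≤ t := div_nonneg (hu i₀ hi₀.1) hi₀.2.le
  refine ⟨i₀, hi₀.1, u - t • g, fun i hi => ?_, ?_⟩
  · have hi := Finset.mem_of_mem_erase hi
    simp only [Pi.sub_apply, Pi.smul_apply, smul_eq_mul, sub_nonneg]
    rcases le_or_gt (g i) 0 with hgi | hgi
    · exact (mul_nonpos_of_nonneg_of_nonpos ht hgi).trans (hu i hi)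
    · exact (le_div_iff₀ hgi).1 (hmin i (Finset.mem_filter.2 ⟨hi, hgi⟩))
  · have hzero : (u - t • g) i₀ = 0 := by simp [t, div_mul_cancel₀ _ hi₀.2.ne']
    rw [Finset.sum_erase (f := fun i => (u - t • g) i • v i) s (by rw [hzero, zero_smul])]
    simp [sub_smul, Finset.sum_sub_distrib, mul_smul, ← Finset.smul_sum, hg]

/-- Carathéodory's theorem for cones. -/
theorem exists_linearIndepOn_sum_eq (v : ι → E) (s : Finset ι) (u : ι → 𝕜)
    (hu : ∀ i ∈ s, 0 ≤ u i) :
    ∃ t ⊆ s, LinearIndepOn 𝕜 v t ∧ ∃ u' : ι → 𝕜, (∀ i ∈ t, 0 ≤ u' i) ∧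
      ∑ i ∈ t, u' i • v i = ∑ i ∈ s, u i • v i := by
  classical
  induction s using Finset.strongInduction generalizing u with
  | H s ih =>
    by_cases hs : LinearIndepOn 𝕜 v s
    · exact ⟨s, subset_rfl, hs, u, hu, rfl⟩
    obtain ⟨i₀, hi₀, u', hu', hsum⟩ := exists_sum_erase_eq_of_not_linearIndepOn hs hu
    obtain ⟨t, hts, ht, u'', hu'', hsum'⟩ := ih _ (Finset.erase_ssubset hi₀) u' hu'
    exact ⟨t, hts.trans (Finset.erase_subset _ _), ht, u'', hu'', hsum'.trans hsum⟩

end Caratheodory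

section Topology

variable {E ι : Type*} [AddCommGroup E] [TopologicalSpace E] [IsTopologicalAddGroup E]
  [Module ℝ E] [ContinuousSMul ℝ E] [T2Space E] [Fintype ι]

lemma isClosed_hull_range_of_linearIndependent {v : ι → E} (hv : LinearIndependent ℝ v) :
    IsClosed (hull ℝ (range v) : Set E) := by
  have himage : (hull ℝ (range v) : Set E) = Fintype.linearCombination ℝ v '' Ici 0 := by
    ext x
    simp [mem_hull_range_iff, Fintype.linearCombination_apply, Pi.le_def]
  rw [himage]
  exact (LinearMap.isClosedEmbedding_of_injective (LinearMap.ker_eq_bot.2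
    hv.fintypeLinearCombination_injective)).isClosedMap _ isClosed_Ici

theorem isClosed_hull_range (v : ι → E) : IsClosed (hull ℝ (range v) : Set E) := by
  classical
  have hunion : (hull ℝ (range v) : Set E) =
      ⋃ t ∈ Finset.univ.filter (fun t : Finset ι => LinearIndepOn ℝ v t),
        (hull ℝ (v '' t) : Set E) := by
    refine Subset.antisymm (fun x hx => ?_)
      (iUnion₂_subset fun t _ => Submodule.span_mono (image_subset_range v t))
    obtain ⟨u, hu, rfl⟩ := mem_hull_range_iff.1 hx
    obtain ⟨t, -, ht, u', hu', hsum⟩ :=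
      exists_linearIndepOn_sum_eq v Finset.univ u fun i _ => hu i
    refine mem_iUnion₂.2 ⟨t, Finset.mem_filter.2 ⟨Finset.mem_univ t, ht⟩, ?_⟩
    rw [← hsum]
    exact Submodule.sum_mem _ fun i hi =>
      smul_mem _ (hu' i hi) (subset_hull (mem_image_of_mem v hi))
  rw [hunion]
  refine isClosed_biUnion_finset fun t ht => ?_
  rw [image_eq_range]
  exact isClosed_hull_range_of_linearIndependent (Finset.mem_filter.1 ht).2

/-- Farkas' lemma. -/
theorem mem_hull_range_of_forall_nonneg [LocallyConvexSpace ℝ E] {v : ι → E} {x : E}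
    (h : ∀ f : StrongDual ℝ E, (∀ i, 0 ≤ f (v i)) → 0 ≤ f x) : x ∈ hull ℝ (range v) := by
  by_contra hx
  obtain ⟨f, hf, hfx⟩ := ProperCone.hyperplane_separation_point
    ⟨hull ℝ (range v), isClosed_hull_range v⟩ hx
  exact hfx.not_ge (h f fun i => hf _ (subset_hull (mem_range_self i)))

end Topology

end PointedCone

namespace Module.Dual

variable {W ι κ : Type*} [AddCommGroup W] [Module ℝ W]

lemma apply_nonneg_of_recession {f : ι → Module.Dual ℝ W} {b : ι → ℝ} {g : Module.Dual ℝ W}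
    {v : ℝ} {w₀ : W} (hw₀ : ∀ i, b i ≤ f i w₀) (hval : ∀ w, (∀ i, b i ≤ f i w) → v ≤ g w)
    {w : W} (hw : ∀ i, 0 ≤ f i w) : 0 ≤ g w := by
  have hray (s : ℝ) (hs : 0 ≤ s) : v ≤ g w₀ + s * g w := by
    simpa using hval (w₀ + s • w) fun i => by
      simpa using le_add_of_le_of_nonneg (hw₀ i) (mul_nonneg hs (hw i))
  by_contra! hneg
  have hs : (g w₀ - v + 1) / -g w * g w = -(g w₀ - v + 1) := by field_simp [hneg.ne]
  have h0 := hray 0 le_rfl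
  linarith [hray ((g w₀ - v + 1) / -g w) (div_nonneg (by linarith) (by linarith))]

variable [FiniteDimensional ℝ W] [Fintype ι] [Fintype κ]

theorem exists_nonneg_sum_smul_eq_of_forall_nonneg {f : ι → Module.Dual ℝ W}
    {g : Module.Dual ℝ W} (h : ∀ w, (∀ i, 0 ≤ f i w) → 0 ≤ g w) :
    ∃ u : ι → ℝ, (∀ i, 0 ≤ u i) ∧ ∑ i, u i • f i = g := by
  classical
  let b := Module.finBasis ℝ W
  let Φ := b.dualBasis.equivFun
  have hΦ (φ : Module.Dual ℝ W) (l) : Φ φ l = φ (b l) := b.dualBasis_repr φ l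
  have hmem : Φ g ∈ PointedCone.hull ℝ (Set.range (Φ ∘ f)) := by
    refine PointedCone.mem_hull_range_of_forall_nonneg fun ψ hψ => ?_
    let w := ∑ l, ψ (fun j => if l = j then 1 else 0) • b l
    have heval (φ : Module.Dual ℝ W) : ψ (Φ φ) = φ w := by
      rw [← ContinuousLinearMap.coe_coe, LinearMap.pi_apply_eq_sum_univ]
      simp [w, hΦ, mul_comm]
    rw [heval]
    exact h w fun i => heval (f i) ▸ hψ i
  obtain ⟨u, hu, hsum⟩ := PointedCone.mem_hull_range_iff.1 hmem
  exact ⟨u, hu, Φ.injective (by simpa [map_sum] using hsum)⟩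

theorem exists_dual_certificate {f : ι → Module.Dual ℝ W} {b : ι → ℝ} {g : Module.Dual ℝ W}
    {v : ℝ} (hfeas : ∃ w, ∀ i, b i ≤ f i w) (hval : ∀ w, (∀ i, b i ≤ f i w) → v ≤ g w) :
    ∃ u : ι → ℝ, (∀ i, 0 ≤ u i) ∧ ∑ i, u i • f i = g ∧ v ≤ ∑ i, u i * b i := by
  classical
  -- homogenization: `0 ≤ t` and `t * b i ≤ f i w` for all `i` imply `t * v ≤ g w`
  let F : Option ι → Module.Dual ℝ (W × ℝ) := Option.elim' (LinearMap.snd ℝ W ℝ) fun i =>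
    f i ∘ₗ LinearMap.fst ℝ W ℝ - b i • LinearMap.snd ℝ W ℝ
  let G : Module.Dual ℝ (W × ℝ) := g ∘ₗ LinearMap.fst ℝ W ℝ - v • LinearMap.snd ℝ W ℝ
  have hhom : ∀ p : W × ℝ, (∀ o, 0 ≤ F o p) → 0 ≤ G p := by
    rintro ⟨w, t⟩ hp
    have ht : 0 ≤ t := hp none
    have hw (i : ι) : t * b i ≤ f i w := by simpa [F, sub_nonneg, mul_comm] using hp (some i)
    simp only [G, LinearMap.sub_apply, LinearMap.comp_apply, LinearMap.fst_apply,
      LinearMap.smul_apply, LinearMap.snd_apply, smul_eq_mul, sub_nonneg]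
    rcases ht.eq_or_lt with rfl | htpos
    · obtain ⟨w₀, hw₀⟩ := hfeas
      simpa using apply_nonneg_of_recession hw₀ hval fun i => by simpa using hw i
    · have := hval (t⁻¹ • w) fun i => by
        rw [map_smul, smul_eq_mul, le_inv_mul_iff₀ htpos]
        exact hw i
      rwa [map_smul, smul_eq_mul, le_inv_mul_iff₀ htpos, mul_comm] at this
  obtain ⟨u, hu, hsum⟩ := exists_nonneg_sum_smul_eq_of_forall_nonneg hhom
  refine ⟨fun i => u (some i), fun i => hu _, ?_, ?_⟩
  · ext w
    simpa [F, G, Fintype.sum_option] using LinearMap.congr_fun hsum (w, 0)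
  · have h01 : u none - ∑ i, u (some i) * b i = -v := by
      simpa [F, G, Fintype.sum_option, sub_eq_add_neg] using LinearMap.congr_fun hsum (0, 1)
    linarith [hu none]

theorem exists_dual_certificate_with_equalities {f : ι → Module.Dual ℝ W} {b : ι → ℝ}
    {e : κ → Module.Dual ℝ W} {c : κ → ℝ} {g : Module.Dual ℝ W} {v : ℝ}
    (hfeas : ∃ w, (∀ i, b i ≤ f i w) ∧ ∀ k, e k w = c k)
    (hval : ∀ w, (∀ i, b i ≤ f i w) → (∀ k, e k w = c k) → v ≤ g w) :
    ∃ u : ι → ℝ, (∀ i, 0 ≤ u i) ∧ ∃ y : κ → ℝ,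
      ∑ i, u i • f i + ∑ k, y k • e k = g ∧ v ≤ ∑ i, u i * b i + ∑ k, y k * c k := by
  have hsplit (w : W) :
      (∀ i, Sum.elim b (Sum.elim c (-c)) i ≤ Sum.elim f (Sum.elim e (-e)) i w) ↔
        (∀ i, b i ≤ f i w) ∧ ∀ k, e k w = c k := by
    simp only [Sum.forall, Sum.elim_inl, Sum.elim_inr, Pi.neg_apply, LinearMap.neg_apply,
      neg_le_neg_iff, ← forall_and, ← le_antisymm_iff, eq_comm]
  obtain ⟨u, hu, hsum, hv⟩ := exists_dual_certificate (g := g) (v := v)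
    (hfeas.imp fun w hw => (hsplit w).2 hw)
    (fun w hw => hval w ((hsplit w).1 hw).1 ((hsplit w).1 hw).2)
  refine ⟨u ∘ Sum.inl, fun i => hu _,
    fun k => u (Sum.inr (Sum.inl k)) - u (Sum.inr (Sum.inr k)), ?_, ?_⟩
  · rw [← hsum]
    simp [Fintype.sum_sum_type, sub_eq_add_neg, add_smul, Finset.sum_add_distrib]
  · refine hv.trans_eq ?_
    simp [Fintype.sum_sum_type, sub_eq_add_neg, add_mul, Finset.sum_add_distrib]

end Module.Dual

lemma le_iff_forall_le_of_eq_ciSup {ι : Type*} [Finite ι] [Nonempty ι] {f : ι → ℝ} {a r : ℝ}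
    (ha : a = ⨆ i, f i) : a ≤ r ↔ ∀ i, f i ≤ r := by
  rw [ha]
  exact ciSup_le_iff (Set.finite_range f).bddAbove

lemma bddBelow_and_le_csInf {α : Type*} [Nonempty α] {F : α → ℝ} {a : ℝ} (h : ∀ x, a ≤ F x) :
    BddBelow {w | ∃ x, w = F x} ∧ a ≤ sInf {w | ∃ x, w = F x} := by
  refine ⟨⟨a, ?_⟩, le_csInf ⟨_, Classical.arbitrary α, rfl⟩ ?_⟩ <;> rintro _ ⟨x, rfl⟩ <;>
    exact h x

open Matrix

lemma scenario_weak_duality {X Y R : Type*} [Fintype X] [Fintype Y] [Fintype R]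
    {A : Matrix R X ℝ} {T : Matrix R Y ℝ} {b d lam : R → ℝ} {c y ybar ξ : Y → ℝ}
    {x xbar μ ζ : X → ℝ} {γ s t : ℝ}
    (heq : A *ᵥ x + b + T *ᵥ y = d) (hx0 : 0 ≤ x) (hx : x ≤ xbar) (hy0 : 0 ≤ y) (hy : y ≤ ybar)
    (hμ : 0 ≤ μ) (hζ : 0 ≤ ζ) (hξ : 0 ≤ ξ) (hdual : 0 ≤ γ • c + Tᵀ *ᵥ lam + ξ)
    (hs : s ≤ (Aᵀ *ᵥ lam - μ + ζ) ⬝ᵥ x + t) :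
    lam ⬝ᵥ (b - d) - xbar ⬝ᵥ ζ - ybar ⬝ᵥ ξ + s ≤ γ * (c ⬝ᵥ y) + t := by
  have hb : lam ⬝ᵥ (b - d) = -((Aᵀ *ᵥ lam) ⬝ᵥ x) - (Tᵀ *ᵥ lam) ⬝ᵥ y := by
    rw [← heq, mulVec_transpose, mulVec_transpose, ← dotProduct_mulVec, ← dotProduct_mulVec]
    simp only [dotProduct_sub, dotProduct_add]
    ring
  have hμx := dotProduct_nonneg_of_nonneg hμ hx0
  have hζx := dotProduct_le_dotProduct_of_nonneg_left hx hζ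
  have hξy := dotProduct_le_dotProduct_of_nonneg_left hy hξ
  have hdy := dotProduct_nonneg_of_nonneg hdual hy0
  simp only [add_dotProduct, sub_dotProduct, smul_dotProduct, smul_eq_mul] at hs hdy
  rw [hb]
  linarith [dotProduct_comm ζ x, dotProduct_comm ζ xbar, dotProduct_comm ξ y,
    dotProduct_comm ξ ybar]

namespace OneStage

variable {n p m J K M : ℕ} (q : Fin K → Fin J → ℝ) (A B : Fin J → Matrix (Fin m) (Fin n) ℝ)
  (T : Fin J → Matrix (Fin m) (Fin p) ℝ) (c : Fin J → Fin p → ℝ) (d : Fin J → Fin m → ℝ)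
  (xbar : Fin n → ℝ) (ybar : Fin p → ℝ) (x₀ : Fin n → ℝ) (aV : Fin M → Fin n → ℝ)
  (bV : Fin M → ℝ) (V : (Fin n → ℝ) → ℝ)

def primalValues : Set ℝ :=
  {z : ℝ | ∃ (x : Fin J → Fin n → ℝ) (y : Fin J → Fin p → ℝ) (θ : Fin J → ℝ),
      (∀ k, ∑ j, q k j * θ j ≤ z) ∧
      (∀ j, (∑ i, c j i * y j i) + V (x j) ≤ θ j) ∧
      (∀ j, (A j).mulVec (x j) + (B j).mulVec x₀ + (T j).mulVec (y j) = d j) ∧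
      (∀ j l, 0 ≤ x j l ∧ x j l ≤ xbar l) ∧
      (∀ j i, 0 ≤ y j i ∧ y j i ≤ ybar i)}

def dualValues : Set ℝ :=
  {v : ℝ | ∃ (φ : Fin K → ℝ) (γ : Fin J → ℝ)
        (lam : Fin J → Fin m → ℝ) (μ ζ : Fin J → Fin n → ℝ) (ξ : Fin J → Fin p → ℝ),
      (∀ k, 0 ≤ φ k) ∧ (∑ k, φ k = 1) ∧
      (∀ j, γ j = ∑ k, φ k * q k j) ∧
      (∀ j l, 0 ≤ μ j l) ∧ (∀ j l, 0 ≤ ζ j l) ∧ (∀ j i, 0 ≤ ξ j i) ∧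
      (∀ j i, 0 ≤ γ j * c j i + ((T j).transpose.mulVec (lam j)) i + ξ j i) ∧
      (∀ j, BddBelow {w : ℝ | ∃ x : Fin n → ℝ,
        w = (∑ l, ((A j).transpose.mulVec (lam j) - μ j + ζ j) l * x l) + γ j * V x}) ∧
      v = ∑ j, ((∑ i2, lam j i2 * ((B j).mulVec x₀ - d j) i2)
            - (∑ l, xbar l * ζ j l) - (∑ i, ybar i * ξ j i)
            + sInf {w : ℝ | ∃ x : Fin n → ℝ,
                w = (∑ l, ((A j).transpose.mulVec (lam j) - μ j + ζ j) l * x l)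
                      + γ j * V x})}

/-- The variables `(z, θ, x, y)` of the primal linear program. -/
abbrev Var (J n p : ℕ) := ℝ × (Fin J → ℝ) × (Fin J → Fin n → ℝ) × (Fin J → Fin p → ℝ)

abbrev Row (J K M n p : ℕ) :=
  Fin K ⊕ (Fin J × Fin M) ⊕ (Fin J × Fin n) ⊕ (Fin J × Fin n) ⊕ (Fin J × Fin p) ⊕ (Fin J × Fin p)

def zCoord : Module.Dual ℝ (Var J n p) := LinearMap.fst ℝ ℝ _

def riskRow (k : Fin K) : Module.Dual ℝ (Var J n p) where
  toFun w := w.1 - q k ⬝ᵥ w.2.1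
  map_add' w w' := by simp [dotProduct_add]; ring
  map_smul' a w := by simp [dotProduct_smul, mul_sub]

def pieceRow (ji : Fin J × Fin M) : Module.Dual ℝ (Var J n p) where
  toFun w := w.2.1 ji.1 - aV ji.2 ⬝ᵥ w.2.2.1 ji.1 - c ji.1 ⬝ᵥ w.2.2.2 ji.1
  map_add' w w' := by simp [dotProduct_add]; ring
  map_smul' a w := by simp [dotProduct_smul, mul_sub]

def xCoord (jl : Fin J × Fin n) : Module.Dual ℝ (Var J n p) where
  toFun w := w.2.2.1 jl.1 jl.2
  map_add' _ _ := rfl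
  map_smul' _ _ := rfl

def yCoord (js : Fin J × Fin p) : Module.Dual ℝ (Var J n p) where
  toFun w := w.2.2.2 js.1 js.2
  map_add' _ _ := rfl
  map_smul' _ _ := rfl

def eqRow (jr : Fin J × Fin m) : Module.Dual ℝ (Var J n p) where
  toFun w := -(A jr.1 *ᵥ w.2.2.1 jr.1 + T jr.1 *ᵥ w.2.2.2 jr.1) jr.2
  map_add' w w' := by simp [mulVec_add]; ring
  map_smul' a w := by simp [mulVec_smul]; ring

def ineqRow : Row J K M n p → Module.Dual ℝ (Var J n p) :=
  Sum.elim (riskRow q) <| Sum.elim (pieceRow c aV) <| Sum.elim xCoord <|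
    Sum.elim (-xCoord ·) <| Sum.elim yCoord (-yCoord ·)

def ineqRhs : Row J K M n p → ℝ :=
  Sum.elim 0 <| Sum.elim (bV ·.2) <| Sum.elim 0 <| Sum.elim (-xbar ·.2) <| Sum.elim 0 (-ybar ·.2)

def eqRhs (jr : Fin J × Fin m) : ℝ := (B jr.1 *ᵥ x₀ - d jr.1) jr.2

def rowWeights (φ : Fin K → ℝ) (σ : Fin J → Fin M → ℝ) (μ ζ : Fin J → Fin n → ℝ)
    (ρ ξ : Fin J → Fin p → ℝ) : Row J K M n p → ℝ :=
  Sum.elim φ <| Sum.elim (fun ji => σ ji.1 ji.2) <| Sum.elim (fun jl => μ jl.1 jl.2) <|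
    Sum.elim (fun jl => ζ jl.1 jl.2) <| Sum.elim (fun js => ρ js.1 js.2) (fun js => ξ js.1 js.2)

def dualCombination (φ : Fin K → ℝ) (σ : Fin J → Fin M → ℝ) (μ ζ : Fin J → Fin n → ℝ)
    (ρ ξ : Fin J → Fin p → ℝ) (lam : Fin J → Fin m → ℝ) : Module.Dual ℝ (Var J n p) :=
  ∑ i, rowWeights φ σ μ ζ ρ ξ i • ineqRow q c aV i + ∑ jr, lam jr.1 jr.2 • eqRow A T jr

variable {q A B T c d xbar ybar x₀ aV bV V}

theorem dualValue_le_primalValue (hq0 : ∀ k j, 0 ≤ q k j) {v z : ℝ}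
    (hv : v ∈ dualValues q A B T c d xbar ybar x₀ V)
    (hz : z ∈ primalValues q A B T c d xbar ybar x₀ V) : v ≤ z := by
  obtain ⟨φ, γ, lam, μ, ζ, ξ, hφ0, hφ1, hγ, hμ, hζ, hξ, hdual, hbdd, rfl⟩ := hv
  obtain ⟨x, y, θ, hz, hθ, heq, hx, hy⟩ := hz
  have hγ0 (j : Fin J) : 0 ≤ γ j :=
    (hγ j).symm ▸ Finset.sum_nonneg fun k _ => mul_nonneg (hφ0 k) (hq0 k j)
  have hscenario (j : Fin J) := scenario_weak_duality (heq j) (fun l => (hx j l).1)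
    (fun l => (hx j l).2) (fun s => (hy j s).1) (fun s => (hy j s).2) (hμ j) (hζ j) (hξ j)
    (fun s => by simpa using hdual j s) (csInf_le (hbdd j) ⟨x j, rfl⟩)
  calc _ ≤ ∑ j, γ j * θ j := Finset.sum_le_sum fun j _ => (hscenario j).trans <| by
        rw [← mul_add]
        exact mul_le_mul_of_nonneg_left (hθ j) (hγ0 j)
    _ = ∑ k, φ k * ∑ j, q k j * θ j := by
        simp only [hγ, Finset.sum_mul, Finset.mul_sum, mul_assoc]
        exact Finset.sum_comm
    _ ≤ ∑ k, φ k * z := Finset.sum_le_sum fun k _ => mul_le_mul_of_nonneg_left (hz k) (hφ0 k)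
    _ = z := by rw [← Finset.sum_mul, hφ1, one_mul]

lemma mem_primalValues_iff (hM : 0 < M) (hV : ∀ x, V x = ⨆ i, aV i ⬝ᵥ x + bV i) {z : ℝ} :
    z ∈ primalValues q A B T c d xbar ybar x₀ V ↔ ∃ w : Var J n p, w.1 = z ∧
      (∀ i, ineqRhs xbar ybar bV i ≤ ineqRow q c aV i w) ∧
      ∀ jr, eqRow A T jr w = eqRhs B d x₀ jr := by
  have : Nonempty (Fin M) := ⟨⟨0, hM⟩⟩
  have hpiece (j : Fin J) (x : Fin J → Fin n → ℝ) (y : Fin J → Fin p → ℝ) (θ : Fin J → ℝ) :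
      c j ⬝ᵥ y j + V (x j) ≤ θ j ↔ ∀ i, bV i ≤ θ j - aV i ⬝ᵥ x j - c j ⬝ᵥ y j := by
    rw [← le_sub_iff_add_le', le_iff_forall_le_of_eq_ciSup (hV _)]
    exact forall_congr' fun i => by constructor <;> intro h <;> linarith
  have heq (j : Fin J) (x : Fin J → Fin n → ℝ) (y : Fin J → Fin p → ℝ) :
      A j *ᵥ x j + B j *ᵥ x₀ + T j *ᵥ y j = d j ↔
        ∀ r, -(A j *ᵥ x j + T j *ᵥ y j) r = (B j *ᵥ x₀ - d j) r := by
    rw [funext_iff]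
    refine forall_congr' fun r => ?_
    simp only [Pi.add_apply, Pi.sub_apply]
    constructor <;> intro h <;> linarith
  simp only [primalValues, Set.mem_ofPred_eq, Prod.exists, exists_and_left, exists_eq_left,
    Sum.forall, Prod.forall, ineqRow, ineqRhs, Sum.elim_inl, Sum.elim_inr, eqRow, eqRhs, riskRow,
    pieceRow, xCoord, yCoord, LinearMap.coe_mk, AddHom.coe_mk, LinearMap.neg_apply, Pi.zero_apply,
    sub_nonneg, neg_le_neg_iff]
  constructor
  · rintro ⟨x, y, θ, hz, hθ, hAB, hx, hy⟩
    exact ⟨θ, x, y, ⟨hz, fun j => (hpiece j x y θ).1 (hθ j), fun j l => (hx j l).1,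
      fun j l => (hx j l).2, fun j s => (hy j s).1, fun j s => (hy j s).2⟩,
      fun j => (heq j x y).1 (hAB j)⟩
  · rintro ⟨θ, x, y, ⟨hz, hθ, hx0, hx, hy0, hy⟩, hAB⟩
    exact ⟨x, y, θ, hz, fun j => (hpiece j x y θ).2 (hθ j), fun j => (heq j x y).2 (hAB j),
      fun j l => ⟨hx0 j l, hx j l⟩, fun j s => ⟨hy0 j s, hy j s⟩⟩

lemma exists_eq_rowWeights (u : Row J K M n p → ℝ) :
    ∃ (φ : Fin K → ℝ) (σ : Fin J → Fin M → ℝ) (μ ζ : Fin J → Fin n → ℝ)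
      (ρ ξ : Fin J → Fin p → ℝ), u = rowWeights φ σ μ ζ ρ ξ :=
  ⟨_, fun j i => u (.inr (.inl (j, i))), fun j l => u (.inr (.inr (.inl (j, l)))),
    fun j l => u (.inr (.inr (.inr (.inl (j, l))))),
    fun j s => u (.inr (.inr (.inr (.inr (.inl (j, s)))))),
    fun j s => u (.inr (.inr (.inr (.inr (.inr (j, s)))))),
    by ext (k | ⟨j, i⟩ | ⟨j, l⟩ | ⟨j, l⟩ | ⟨j, s⟩ | ⟨j, s⟩) <;> rfl⟩

section Multipliers

variable {φ : Fin K → ℝ} {σ : Fin J → Fin M → ℝ} {μ ζ : Fin J → Fin n → ℝ}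
  {ρ ξ : Fin J → Fin p → ℝ} {lam : Fin J → Fin m → ℝ}

lemma dualCombination_apply (w : Var J n p) :
    dualCombination q A T c aV φ σ μ ζ ρ ξ lam w =
      ∑ k, φ k * (w.1 - q k ⬝ᵥ w.2.1) +
      ∑ j, ∑ i, σ j i * (w.2.1 j - aV i ⬝ᵥ w.2.2.1 j - c j ⬝ᵥ w.2.2.2 j) +
      ∑ j, (μ j - ζ j) ⬝ᵥ w.2.2.1 j + ∑ j, (ρ j - ξ j) ⬝ᵥ w.2.2.2 j -
      ∑ j, lam j ⬝ᵥ (A j *ᵥ w.2.2.1 j + T j *ᵥ w.2.2.2 j) := by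
  simp only [dualCombination, rowWeights, ineqRow, riskRow, pieceRow, xCoord, yCoord, eqRow,
    Fintype.sum_sum_type, Fintype.sum_prod_type, LinearMap.add_apply, LinearMap.coe_sum,
    Finset.sum_apply, LinearMap.smul_apply, LinearMap.neg_apply, Sum.elim_inl, Sum.elim_inr,
    LinearMap.coe_mk, AddHom.coe_mk, smul_eq_mul, dotProduct, Pi.add_apply, Pi.sub_apply, sub_mul,
    mul_sub, mul_neg, mul_add, Finset.sum_add_distrib, Finset.sum_sub_distrib,
    Finset.sum_neg_distrib]
  ring

lemma coeff_z_of_dualCombination_eq (h : dualCombination q A T c aV φ σ μ ζ ρ ξ lam = zCoord) :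
    ∑ k, φ k = 1 := by
  simpa [dualCombination_apply, zCoord] using LinearMap.congr_fun h (1, 0, 0, 0)

lemma coeff_θ_of_dualCombination_eq (h : dualCombination q A T c aV φ σ μ ζ ρ ξ lam = zCoord)
    (j : Fin J) : ∑ k, φ k * q k j = ∑ i, σ j i := by
  have hθ : -∑ k, φ k * q k j + ∑ i, σ j i = 0 := by
    simpa [dualCombination_apply, zCoord, Pi.single_apply]
      using LinearMap.congr_fun h (0, Pi.single j 1, 0, 0)
  linarith

lemma coeff_x_of_dualCombination_eq (h : dualCombination q A T c aV φ σ μ ζ ρ ξ lam = zCoord)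
    (j : Fin J) (x : Fin n → ℝ) :
    ((A j)ᵀ *ᵥ lam j - μ j + ζ j) ⬝ᵥ x = -∑ i, σ j i * aV i ⬝ᵥ x := by
  have hx : -∑ i, σ j i * aV i ⬝ᵥ x + (μ j - ζ j) ⬝ᵥ x - lam j ⬝ᵥ (A j *ᵥ x) = 0 := by
    simpa [dualCombination_apply, zCoord, Pi.single_apply, apply_ite]
      using LinearMap.congr_fun h (0, 0, Pi.single j x, 0)
  rw [add_dotProduct, sub_dotProduct, mulVec_transpose, ← dotProduct_mulVec]
  rw [sub_dotProduct] at hx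
  linarith

lemma coeff_y_of_dualCombination_eq (h : dualCombination q A T c aV φ σ μ ζ ρ ξ lam = zCoord)
    (j : Fin J) (s : Fin p) : (∑ i, σ j i) * c j s + ((T j)ᵀ *ᵥ lam j) s + ξ j s = ρ j s := by
  have hy : -∑ i, σ j i * c j s + (ρ j s - ξ j s) - lam j ⬝ᵥ (T j).col s = 0 := by
    simpa [dualCombination_apply, zCoord, Pi.single_apply, apply_ite, dotProduct_single]
      using LinearMap.congr_fun h (0, 0, 0, Pi.single j (Pi.single s 1))
  have hT : ((T j)ᵀ *ᵥ lam j) s = lam j ⬝ᵥ (T j).col s := by rw [mulVec_transpose]; rfl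
  rw [hT, Finset.sum_mul]
  linarith

lemma exists_mem_dualValues_ge_of_dualCombination_eq (hV : ∀ x i, aV i ⬝ᵥ x + bV i ≤ V x)
    (hu : ∀ i, 0 ≤ rowWeights φ σ μ ζ ρ ξ i)
    (h : dualCombination q A T c aV φ σ μ ζ ρ ξ lam = zCoord) :
    ∃ v ∈ dualValues q A B T c d xbar ybar x₀ V,
      ∑ j, (lam j ⬝ᵥ (B j *ᵥ x₀ - d j) - xbar ⬝ᵥ ζ j - ybar ⬝ᵥ ξ j + ∑ i, σ j i * bV i) ≤ v := by
  simp only [rowWeights, Sum.forall, Sum.elim_inl, Sum.elim_inr, Prod.forall] at hu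
  obtain ⟨hφ, hσ, hμ, hζ, hρ, hξ⟩ := hu
  set γ : Fin J → ℝ := fun j => ∑ k, φ k * q k j
  have hγ (j : Fin J) : γ j = ∑ i, σ j i := coeff_θ_of_dualCombination_eq h j
  have hinner (j : Fin J) (x : Fin n → ℝ) :
      ∑ i, σ j i * bV i ≤ ((A j)ᵀ *ᵥ lam j - μ j + ζ j) ⬝ᵥ x + γ j * V x := by
    have := Finset.sum_le_sum fun i (_ : i ∈ Finset.univ) =>
      mul_le_mul_of_nonneg_left (hV x i) (hσ j i)
    simp only [mul_add, Finset.sum_add_distrib] at this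
    rw [coeff_x_of_dualCombination_eq h, hγ, Finset.sum_mul]
    linarith
  refine ⟨_, ⟨φ, γ, lam, μ, ζ, ξ, hφ, coeff_z_of_dualCombination_eq h, fun j => rfl, hμ, hζ,
    hξ, fun j s => ?_, fun j => (bddBelow_and_le_csInf (hinner j)).1, rfl⟩,
    Finset.sum_le_sum fun j _ => add_le_add_right (bddBelow_and_le_csInf (hinner j)).2 _⟩
  rw [hγ, coeff_y_of_dualCombination_eq h]
  exact hρ j s

end Multipliers

theorem exists_mem_dualValues_ge_sInf (hM : 0 < M) (hV : ∀ x, V x = ⨆ i, aV i ⬝ᵥ x + bV i)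
    (hfeas : (primalValues q A B T c d xbar ybar x₀ V).Nonempty)
    (hbdd : BddBelow (primalValues q A B T c d xbar ybar x₀ V)) :
    ∃ v ∈ dualValues q A B T c d xbar ybar x₀ V,
      sInf (primalValues q A B T c d xbar ybar x₀ V) ≤ v := by
  obtain ⟨u, hu, η, hsum, hval⟩ := Module.Dual.exists_dual_certificate_with_equalities
    (f := ineqRow q c aV) (b := ineqRhs xbar ybar bV) (e := eqRow A T) (c := eqRhs B d x₀)
    (g := zCoord) (hfeas.elim fun _ hz => ((mem_primalValues_iff hM hV).1 hz).imp fun _ hw => hw.2)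
    (fun w hi he => csInf_le hbdd ((mem_primalValues_iff hM hV).2 ⟨w, rfl, hi, he⟩))
  obtain ⟨φ, σ, μ, ζ, ρ, ξ, rfl⟩ := exists_eq_rowWeights u
  obtain ⟨lam, rfl⟩ : ∃ lam : Fin J → Fin m → ℝ, η = fun jr => lam jr.1 jr.2 :=
    ⟨fun j r => η (j, r), rfl⟩
  obtain ⟨v, hv, hle⟩ := exists_mem_dualValues_ge_of_dualCombination_eq
    (fun x i => hV x ▸ le_ciSup (Set.finite_range _).bddAbove i) hu hsum
  refine ⟨v, hv, hval.trans (le_of_eq_of_le ?_ hle)⟩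
  simp only [rowWeights, ineqRhs, eqRhs, Fintype.sum_sum_type, Fintype.sum_prod_type, Sum.elim_inl,
    Sum.elim_inr, Pi.zero_apply, mul_zero, mul_neg, Finset.sum_const_zero, dotProduct,
    Finset.sum_add_distrib, Finset.sum_sub_distrib, Finset.sum_neg_distrib, mul_comm (xbar _),
    mul_comm (ybar _)]
  ring

end OneStage
theorem one_stage_risk_averse_strong_duality_general
    (n p m J K : ℕ) (q : Fin K → Fin J → ℝ)
    (hq0 : ∀ k j, 0 ≤ q k j)
    (A B : Fin J → Matrix (Fin m) (Fin n) ℝ) (T : Fin J → Matrix (Fin m) (Fin p) ℝ)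
    (c : Fin J → Fin p → ℝ) (d : Fin J → Fin m → ℝ)
    (xbar : Fin n → ℝ) (ybar : Fin p → ℝ) (x₀ : Fin n → ℝ)
    -- V is a polyhedral (piecewise-linear) convex function:
    (M : ℕ) (hM : 0 < M) (aV : Fin M → Fin n → ℝ) (bV : Fin M → ℝ)
    (V : (Fin n → ℝ) → ℝ) (hV : ∀ x, V x = ⨆ i : Fin M, ((∑ l, aV i l * x l) + bV i))
    -- primal objective value set:
    (P : Set ℝ)
    (hP : P = {z : ℝ | ∃ (x : Fin J → Fin n → ℝ) (y : Fin J → Fin p → ℝ)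
        (θ : Fin J → ℝ),
      (∀ k, ∑ j, q k j * θ j ≤ z) ∧
      (∀ j, (∑ i, c j i * y j i) + V (x j) ≤ θ j) ∧
      (∀ j, (A j).mulVec (x j) + (B j).mulVec x₀ + (T j).mulVec (y j) = d j) ∧
      (∀ j l, 0 ≤ x j l ∧ x j l ≤ xbar l) ∧
      (∀ j i, 0 ≤ y j i ∧ y j i ≤ ybar i)})
    -- dual objective value set:
    (D : Set ℝ)
    (hD : D = {v : ℝ | ∃ (φ : Fin K → ℝ) (γ : Fin J → ℝ)
        (lam : Fin J → Fin m → ℝ) (μ ζ : Fin J → Fin n → ℝ) (ξ : Fin J → Fin p → ℝ),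
      (∀ k, 0 ≤ φ k) ∧ (∑ k, φ k = 1) ∧
      (∀ j, γ j = ∑ k, φ k * q k j) ∧
      (∀ j l, 0 ≤ μ j l) ∧ (∀ j l, 0 ≤ ζ j l) ∧ (∀ j i, 0 ≤ ξ j i) ∧
      (∀ j i, 0 ≤ γ j * c j i + ((T j).transpose.mulVec (lam j)) i + ξ j i) ∧
      (∀ j, BddBelow {w : ℝ | ∃ x : Fin n → ℝ,
        w = (∑ l, ((A j).transpose.mulVec (lam j) - μ j + ζ j) l * x l) + γ j * V x}) ∧
      v = ∑ j, ((∑ i2, lam j i2 * ((B j).mulVec x₀ - d j) i2)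
            - (∑ l, xbar l * ζ j l) - (∑ i, ybar i * ξ j i)
            + sInf {w : ℝ | ∃ x : Fin n → ℝ,
                w = (∑ l, ((A j).transpose.mulVec (lam j) - μ j + ζ j) l * x l)
                      + γ j * V x})})
    (hfeas : P.Nonempty) (hbdd : BddBelow P) :
    sInf P = sSup D := by
  replace hP : P = OneStage.primalValues q A B T c d xbar ybar x₀ V := hP
  replace hD : D = OneStage.dualValues q A B T c d xbar ybar x₀ V := hD
  have hweak : ∀ v ∈ D, v ≤ sInf P := fun v hv =>
    le_csInf hfeas fun z hz => OneStage.dualValue_le_primalValue hq0 (hD ▸ hv) (hP ▸ hz)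
  obtain ⟨v₀, hv₀, hle⟩ := OneStage.exists_mem_dualValues_ge_sInf hM hV (hP ▸ hfeas) (hP ▸ hbdd)
  rw [← hP] at hle
  rw [← hD] at hv₀
  exact le_antisymm (hle.trans (le_csSup ⟨_, hweak⟩ hv₀)) (csSup_le ⟨v₀, hv₀⟩ hweak)

/-- Strong LP duality for the one-stage risk-averse problem with a polyhedral
risk measure and a polyhedral convex cost-to-go function `V`: if the primal is
feasible with finite value, then its value equals the value of the dual. -/
theorem one_stage_risk_averse_strong_duality
    (n p m J K : ℕ) (q : Fin K → Fin J → ℝ)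
    (hq0 : ∀ k j, 0 ≤ q k j) (hq1 : ∀ k, ∑ j, q k j = 1)
    (A B : Fin J → Matrix (Fin m) (Fin n) ℝ) (T : Fin J → Matrix (Fin m) (Fin p) ℝ)
    (c : Fin J → Fin p → ℝ) (d : Fin J → Fin m → ℝ)
    (xbar : Fin n → ℝ) (ybar : Fin p → ℝ) (x₀ : Fin n → ℝ)
    -- V is a polyhedral (piecewise-linear) convex function:
    (M : ℕ) (hM : 0 < M) (aV : Fin M → Fin n → ℝ) (bV : Fin M → ℝ)
    (V : (Fin n → ℝ) → ℝ) (hV : ∀ x, V x = ⨆ i : Fin M, ((∑ l, aV i l * x l) + bV i))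
    -- primal objective value set:
    (P : Set ℝ)
    (hP : P = {z : ℝ | ∃ (x : Fin J → Fin n → ℝ) (y : Fin J → Fin p → ℝ)
        (θ : Fin J → ℝ),
      (∀ k, ∑ j, q k j * θ j ≤ z) ∧
      (∀ j, (∑ i, c j i * y j i) + V (x j) ≤ θ j) ∧
      (∀ j, (A j).mulVec (x j) + (B j).mulVec x₀ + (T j).mulVec (y j) = d j) ∧
      (∀ j l, 0 ≤ x j l ∧ x j l ≤ xbar l) ∧
      (∀ j i, 0 ≤ y j i ∧ y j i ≤ ybar i)})
    -- dual objective value set: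
    (D : Set ℝ)
    (hD : D = {v : ℝ | ∃ (φ : Fin K → ℝ) (γ : Fin J → ℝ)
        (lam : Fin J → Fin m → ℝ) (μ ζ : Fin J → Fin n → ℝ) (ξ : Fin J → Fin p → ℝ),
      (∀ k, 0 ≤ φ k) ∧ (∑ k, φ k = 1) ∧
      (∀ j, γ j = ∑ k, φ k * q k j) ∧
      (∀ j l, 0 ≤ μ j l) ∧ (∀ j l, 0 ≤ ζ j l) ∧ (∀ j i, 0 ≤ ξ j i) ∧
      (∀ j i, 0 ≤ γ j * c j i + ((T j).transpose.mulVec (lam j)) i + ξ j i) ∧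
      (∀ j, BddBelow {w : ℝ | ∃ x : Fin n → ℝ,
        w = (∑ l, ((A j).transpose.mulVec (lam j) - μ j + ζ j) l * x l) + γ j * V x}) ∧
      v = ∑ j, ((∑ i2, lam j i2 * ((B j).mulVec x₀ - d j) i2)
            - (∑ l, xbar l * ζ j l) - (∑ i, ybar i * ξ j i)
            + sInf {w : ℝ | ∃ x : Fin n → ℝ,
                w = (∑ l, ((A j).transpose.mulVec (lam j) - μ j + ζ j) l * x l)
                      + γ j * V x})})
    (hfeas : P.Nonempty) (hbdd : BddBelow P) :
    sInf P = sSup D :=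
  one_stage_risk_averse_strong_duality_general n p m J K q hq0 A B T c d xbar ybar x₀ M hM aV bV V
    hV P hP D hD hfeas hbdd
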